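/- arXiv:1404.6732 — 2 statements merged into one kernel-verified Lean document; each statement's English description precedes it below -/
import Mathlib

section
/- For distinct x, y ∈ (0, π/2), the logarithmic mean satisfies L(1/cos x, 1/cos y) ≥ 1/cos(L(x, y)). -/
/-!
Chain the geometric, logarithmic and arithmetic means:
`L(sec x, sec y) ≥ √(sec x · sec y) ≥ sec ((x + y) / 2) ≥ sec (L(x, y))`.
The outer steps are `G ≤ L` and `L ≤ A` (the latter combined with `sec` increasing on
`[0, π/2)`); the middle one is the log-convexity of `sec`: `cos x cos y ≤ cos² ((x + y) / 2)`.
-/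

noncomputable def logMean (a b : ℝ) : ℝ := (a - b) / (Real.log a - Real.log b)

open Real

open Set

lemma sinh_le_mul_cosh {u : ℝ} (hu : 0 ≤ u) : sinh u ≤ u * cosh u := by
  have hderiv (t : ℝ) : HasDerivAt (fun t ↦ t * cosh t - sinh t) (t * sinh t) t :=
    (((hasDerivAt_id' t).fun_mul (hasDerivAt_cosh t)).fun_sub (hasDerivAt_sinh t)).congr_deriv
      (by ring)
  have hmono : MonotoneOn (fun t ↦ t * cosh t - sinh t) (Ici 0) :=
    monotoneOn_of_deriv_nonneg (convex_Ici 0)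
      (fun t _ ↦ (hderiv t).continuousAt.continuousWithinAt)
      (fun t _ ↦ (hderiv t).differentiableAt.differentiableWithinAt)
      (fun t ht ↦ by
        rw [interior_Ici] at ht
        rw [(hderiv t).deriv]
        exact mul_nonneg ht.out.le (sinh_nonneg_iff.2 ht.out.le))
  simpa using hmono self_mem_Ici hu hu

lemma one_le_sinh_div_self {u : ℝ} (hu : u ≠ 0) : 1 ≤ sinh u / u := by
  rcases hu.lt_or_gt with hneg | hpos
  · rw [le_div_iff_of_neg hneg, one_mul]
    simpa using self_le_sinh_iff.2 (neg_nonneg.2 hneg.le)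
  · rw [le_div_iff₀ hpos, one_mul]
    exact self_le_sinh_iff.2 hpos.le

lemma sinh_div_self_le_cosh (u : ℝ) : sinh u / u ≤ cosh u := by
  rcases lt_trichotomy u 0 with hneg | rfl | hpos
  · have h := sinh_le_mul_cosh (neg_nonneg.2 hneg.le)
    rw [sinh_neg, cosh_neg] at h
    rw [div_le_iff_of_neg hneg]
    linarith
  · simp
  · rw [div_le_iff₀ hpos, mul_comm]
    exact sinh_le_mul_cosh hpos.le

lemma exp_sub_exp_eq (s t : ℝ) :
    exp t - exp s = 2 * exp ((t + s) / 2) * sinh ((t - s) / 2) := by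
  have ht : exp ((t + s) / 2) * exp ((t - s) / 2) = exp t := by rw [← exp_add]; ring_nf
  have hs : exp ((t + s) / 2) * exp (-((t - s) / 2)) = exp s := by rw [← exp_add]; ring_nf
  rw [sinh_eq]
  linear_combination hs - ht

lemma exp_add_exp_eq (s t : ℝ) :
    exp t + exp s = 2 * exp ((t + s) / 2) * cosh ((t - s) / 2) := by
  have ht : exp ((t + s) / 2) * exp ((t - s) / 2) = exp t := by rw [← exp_add]; ring_nf
  have hs : exp ((t + s) / 2) * exp (-((t - s) / 2)) = exp s := by rw [← exp_add]; ring_nf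
  rw [cosh_eq]
  linear_combination -hs - ht

/-- With `a = exp t`, `b = exp s`, this turns `G ≤ L ≤ A` into `1 ≤ sinh u / u ≤ cosh u`. -/
lemma logMean_exp_exp (s t : ℝ) :
    logMean (exp t) (exp s) = exp ((t + s) / 2) * (sinh ((t - s) / 2) / ((t - s) / 2)) := by
  rw [logMean, log_exp, log_exp, exp_sub_exp_eq, div_div_eq_mul_div]
  ring

lemma sqrt_mul_le_logMean {a b : ℝ} (ha : 0 < a) (hb : 0 < b) (hab : a ≠ b) :
    √(a * b) ≤ logMean a b := by
  rw [← exp_log ha, ← exp_log hb, logMean_exp_exp, ← exp_add, ← exp_half]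
  refine le_mul_of_one_le_right (exp_pos _).le (one_le_sinh_div_self ?_)
  exact div_ne_zero (sub_ne_zero.2 fun h ↦ hab (log_injOn_pos ha hb h)) two_ne_zero

lemma logMean_le_add_div_two {a b : ℝ} (ha : 0 < a) (hb : 0 < b) :
    logMean a b ≤ (a + b) / 2 := by
  rw [← exp_log ha, ← exp_log hb, logMean_exp_exp, exp_add_exp_eq, mul_assoc,
    mul_div_cancel_left₀ _ two_ne_zero]
  exact mul_le_mul_of_nonneg_left (sinh_div_self_le_cosh _) (exp_pos _).le

lemma logMean_pos {a b : ℝ} (ha : 0 < a) (hb : 0 < b) (hab : a ≠ b) : 0 < logMean a b :=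
  (sqrt_pos.2 (mul_pos ha hb)).trans_le (sqrt_mul_le_logMean ha hb hab)

lemma cos_mul_cos_le_cos_add_div_two_sq (x y : ℝ) :
    cos x * cos y ≤ cos ((x + y) / 2) ^ 2 := by
  rw [cos_sq, show 2 * ((x + y) / 2) = x + y by ring, cos_add]
  nlinarith [cos_sub x y, cos_le_one (x - y)]

lemma one_div_cos_add_div_two_le_sqrt {x y : ℝ} (hx : x ∈ Ioo (-(π / 2)) (π / 2))
    (hy : y ∈ Ioo (-(π / 2)) (π / 2)) :
    1 / cos ((x + y) / 2) ≤ √(1 / cos x * (1 / cos y)) := by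
  have hcx := cos_pos_of_mem_Ioo hx
  have hcy := cos_pos_of_mem_Ioo hy
  have hcm : 0 < cos ((x + y) / 2) :=
    cos_pos_of_mem_Ioo ⟨by linarith [hx.1, hy.1], by linarith [hx.2, hy.2]⟩
  rw [le_sqrt' (one_div_pos.2 hcm), one_div_pow, one_div_mul_one_div]
  exact one_div_le_one_div_of_le (mul_pos hcx hcy) (cos_mul_cos_le_cos_add_div_two_sq x y)

theorem stmt9 (x y : ℝ) (hx : x ∈ Set.Ioo 0 (π / 2)) (hy : y ∈ Set.Ioo 0 (π / 2))
    (hxy : x ≠ y) :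
    logMean (1 / Real.cos x) (1 / Real.cos y) ≥ 1 / Real.cos (logMean x y) := by
  have hx' : x ∈ Ioo (-(π / 2)) (π / 2) := ⟨by linarith [hx.1, pi_pos], hx.2⟩
  have hy' : y ∈ Ioo (-(π / 2)) (π / 2) := ⟨by linarith [hy.1, pi_pos], hy.2⟩
  have hcx := cos_pos_of_mem_Ioo hx'
  have hcy := cos_pos_of_mem_Ioo hy'
  have hcos_ne : 1 / cos x ≠ 1 / cos y := fun h ↦ hxy <|
    injOn_cos ⟨hx.1.le, by linarith [hx.2, pi_pos]⟩ ⟨hy.1.le, by linarith [hy.2, pi_pos]⟩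
      (by simpa using h)
  have hL_pos : 0 < logMean x y := logMean_pos hx.1 hy.1 hxy
  have hL_le : logMean x y ≤ (x + y) / 2 := logMean_le_add_div_two hx.1 hy.1
  have hcos_mid : 0 < cos ((x + y) / 2) :=
    cos_pos_of_mem_Ioo ⟨by linarith [hx'.1, hy'.1], by linarith [hx.2, hy.2]⟩
  calc 1 / cos (logMean x y)
      ≤ 1 / cos ((x + y) / 2) := one_div_le_one_div_of_le hcos_mid
        (cos_le_cos_of_nonneg_of_le_pi hL_pos.le (by linarith [hx.2, hy.2, pi_pos]) hL_le)
    _ ≤ √(1 / cos x * (1 / cos y)) := one_div_cos_add_div_two_le_sqrt hx' hy'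
    _ ≤ logMean (1 / cos x) (1 / cos y) :=
        sqrt_mul_le_logMean (one_div_pos.2 hcx) (one_div_pos.2 hcy) hcos_ne
end

section
/- For distinct x, y ∈ (π/4, π/2), the logarithmic mean satisfies L(tan x, tan y) ≥ tan(L(x, y)). -/
open Real

/-!
For positive `a ≠ b`, `logMean a b = ∫₀¹ a^t b^(1-t) dt`, written here as
`∫₀¹ exp (t log a + (1-t) log b) dt`. Jensen's inequality for `tan`, convex on `[0, π/2)`, gives
`tan (logMean x y) ≤ ∫₀¹ tan (x^t y^(1-t)) dt`. The function `u ↦ log (tan (exp u))` is convex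
where `exp u < π/2`, because its derivative `2eᵘ / sin (2eᵘ)` increases (`w / sin w` increases
on `(0, π)` as `w cos w < sin w`). Hence `tan (x^t y^(1-t)) ≤ (tan x)^t (tan y)^(1-t)`, and the
integral of the right-hand side is `logMean (tan x) (tan y)`.
-/

open MeasureTheory Set

lemma logMean_comm (a b : ℝ) : logMean a b = logMean b a := by
  rw [logMean, logMean, ← neg_div_neg_eq, neg_sub, neg_sub]

lemma integral_exp_convexComb {p q : ℝ} (hpq : p ≠ q) :
    ∫ t in (0 : ℝ)..1, exp (t * p + (1 - t) * q) = (exp p - exp q) / (p - q) := by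
  have hpq' : p - q ≠ 0 := sub_ne_zero.2 hpq
  have hsplit (t : ℝ) : exp (t * p + (1 - t) * q) = exp q * exp (t * (p - q)) := by
    rw [← exp_add]; ring_nf
  simp_rw [hsplit]
  rw [intervalIntegral.integral_const_mul, intervalIntegral.integral_comp_mul_right exp hpq',
    integral_exp, zero_mul, exp_zero, one_mul, smul_eq_mul,
    show exp p = exp q * exp (p - q) by rw [← exp_add]; ring_nf]
  field_simp

lemma logMean_eq_integral {a b : ℝ} (ha : 0 < a) (hb : 0 < b) (hab : a ≠ b) :
    logMean a b = ∫ t in (0 : ℝ)..1, exp (t * log a + (1 - t) * log b) := by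
  rw [integral_exp_convexComb ((log_injOn_pos.ne_iff ha hb).2 hab), exp_log ha, exp_log hb,
    logMean]

lemma exp_convexComb_log_mem_Icc {a b t : ℝ} (ha : 0 < a) (hab : a ≤ b) (ht : t ∈ Icc 0 1) :
    exp (t * log b + (1 - t) * log a) ∈ Icc a b := by
  have hlog : log a ≤ log b := log_le_log ha hab
  constructor
  · calc a = exp (log a) := (exp_log ha).symm
      _ ≤ _ := exp_le_exp.2 (by nlinarith [ht.1, ht.2])
  · calc _ ≤ exp (log b) := exp_le_exp.2 (by nlinarith [ht.1, ht.2])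
      _ = b := exp_log (ha.trans_le hab)

theorem ConvexOn.map_intervalIntegral_le {s : Set ℝ} {f g : ℝ → ℝ} (hf : ConvexOn ℝ s f)
    (hfc : ContinuousOn f s) (hs : IsClosed s) (hg : ContinuousOn g (Icc 0 1))
    (hgs : MapsTo g (Icc 0 1) s) :
    f (∫ t in (0 : ℝ)..1, g t) ≤ ∫ t in (0 : ℝ)..1, f (g t) := by
  have : IsProbabilityMeasure (volume.restrict (Ioc (0 : ℝ) 1)) :=
    ⟨by simp [Real.volume_Ioc]⟩
  simp only [intervalIntegral.integral_of_le zero_le_one]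
  refine hf.map_integral_le hfc hs ?_ (hg.integrableOn_Icc.mono_set Ioc_subset_Icc_self)
    ((hfc.comp hg hgs).integrableOn_Icc.mono_set Ioc_subset_Icc_self)
  filter_upwards [ae_restrict_mem measurableSet_Ioc] with t ht
  exact hgs ⟨ht.1.le, ht.2⟩

lemma convexOn_tan : ConvexOn ℝ (Ico 0 (π / 2)) tan := by
  have hcos : ∀ v ∈ Ico 0 (π / 2), 0 < cos v := fun v hv =>
    cos_pos_of_mem_Ioo ⟨by linarith [hv.1, pi_pos], hv.2⟩
  refine MonotoneOn.convexOn_of_deriv (convex_Ico _ _)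
    (continuousOn_tan.mono fun v hv => (hcos v hv).ne') ?_ ?_ <;> rw [interior_Ico]
  · exact fun v hv =>
      (differentiableAt_tan.2 (hcos v (Ioo_subset_Ico_self hv)).ne').differentiableWithinAt
  · intro u hu v hv huv
    have hcv := hcos v (Ioo_subset_Ico_self hv)
    have : cos v ≤ cos u :=
      cos_le_cos_of_nonneg_of_le_pi hu.1.le (by linarith [hv.2, pi_pos]) huv
    rw [deriv_tan, deriv_tan]
    gcongr

lemma mul_cos_lt_sin {w : ℝ} (h0 : 0 < w) (hw : w < π) : w * cos w < sin w := by
  have hsin : 0 < sin w := sin_pos_of_pos_of_lt_pi h0 hw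
  rcases lt_or_ge w (π / 2) with hw' | hw'
  · have hcos : 0 < cos w := cos_pos_of_mem_Ioo ⟨by linarith, hw'⟩
    have := lt_tan h0 hw'
    rwa [tan_eq_sin_div_cos, lt_div_iff₀ hcos] at this
  · nlinarith [cos_nonpos_of_pi_div_two_le_of_le hw' (by linarith : w ≤ π + π / 2)]

lemma strictMonoOn_div_sin : StrictMonoOn (fun w => w / sin w) (Ioo 0 π) := by
  have hsin : ∀ w ∈ Ioo 0 π, 0 < sin w := fun w hw => sin_pos_of_mem_Ioo hw
  refine strictMonoOn_of_deriv_pos (convex_Ioo _ _)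
    (continuousOn_id.div continuousOn_sin fun w hw => (hsin w hw).ne') fun w hw => ?_
  rw [interior_Ioo] at hw
  have hd : HasDerivAt (fun w => w / sin w) ((1 * sin w - w * cos w) / sin w ^ 2) w :=
    (hasDerivAt_id w).div (hasDerivAt_sin w) (hsin w hw).ne'
  rw [hd.deriv]
  have hnum := mul_cos_lt_sin hw.1 hw.2
  have hden := hsin w hw
  apply div_pos <;> nlinarith

lemma hasDerivAt_log_tan_exp {u : ℝ} (hu : exp u < π / 2) :
    HasDerivAt (fun u => log (tan (exp u))) (2 * exp u / sin (2 * exp u)) u := by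
  have hcos : 0 < cos (exp u) := cos_pos_of_mem_Ioo ⟨by linarith [exp_pos u, pi_pos], hu⟩
  have hsin : 0 < sin (exp u) := sin_pos_of_pos_of_lt_pi (exp_pos u) (by linarith [pi_pos])
  have htan : 0 < tan (exp u) := by rw [tan_eq_sin_div_cos]; positivity
  refine (((hasDerivAt_tan hcos.ne').comp u (hasDerivAt_exp u)).log htan.ne').congr_deriv ?_
  rw [Function.comp_apply, sin_two_mul, tan_eq_sin_div_cos]
  field_simp

lemma convexOn_log_tan_exp : ConvexOn ℝ (Iio (log (π / 2))) fun u => log (tan (exp u)) := by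
  have hexp : ∀ u ∈ Iio (log (π / 2)), exp u < π / 2 := fun u hu =>
    (lt_log_iff_exp_lt (by positivity)).1 hu
  refine MonotoneOn.convexOn_of_deriv (convex_Iio _)
    (fun u hu => (hasDerivAt_log_tan_exp (hexp u hu)).continuousAt.continuousWithinAt) ?_ ?_
    <;> rw [interior_Iio]
  · exact fun u hu => (hasDerivAt_log_tan_exp (hexp u hu)).differentiableAt.differentiableWithinAt
  · intro u hu v hv huv
    rw [(hasDerivAt_log_tan_exp (hexp u hu)).deriv, (hasDerivAt_log_tan_exp (hexp v hv)).deriv]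
    have hmem : ∀ w ∈ Iio (log (π / 2)), 2 * exp w ∈ Ioo 0 π := fun w hw =>
      ⟨by positivity, by linarith [hexp w hw]⟩
    exact strictMonoOn_div_sin.monotoneOn (hmem u hu) (hmem v hv) (by gcongr)

lemma tan_exp_convexComb_log_le {x y t : ℝ} (hx : x ∈ Ioo 0 (π / 2)) (hy : y ∈ Ioo 0 (π / 2))
    (ht0 : 0 ≤ t) (ht1 : t ≤ 1) :
    tan (exp (t * log x + (1 - t) * log y)) ≤ exp (t * log (tan x) + (1 - t) * log (tan y)) := by
  have hlog : ∀ v ∈ Ioo 0 (π / 2), log v ∈ Iio (log (π / 2)) := fun v hv =>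
    log_lt_log hv.1 hv.2
  have hcomb := (convex_Iio _) (hlog x hx) (hlog y hy) ht0 (sub_nonneg.2 ht1) (add_sub_cancel t 1)
  have hconv := convexOn_log_tan_exp.2 (hlog x hx) (hlog y hy) ht0 (sub_nonneg.2 ht1)
    (add_sub_cancel t 1)
  simp only [smul_eq_mul, exp_log hx.1, exp_log hy.1] at hcomb hconv
  have htan : 0 < tan (exp (t * log x + (1 - t) * log y)) :=
    tan_pos_of_pos_of_lt_pi_div_two (exp_pos _) ((lt_log_iff_exp_lt (by positivity)).1 hcomb)
  calc _ = exp (log (tan (exp (t * log x + (1 - t) * log y)))) := (exp_log htan).symm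
    _ ≤ _ := exp_le_exp.2 hconv

theorem tan_logMean_le_logMean_tan {x y : ℝ} (hy : 0 < y) (hyx : y < x) (hx : x < π / 2) :
    tan (logMean x y) ≤ logMean (tan x) (tan y) := by
  have hx' : x ∈ Ioo 0 (π / 2) := ⟨hy.trans hyx, hx⟩
  have hy' : y ∈ Ioo 0 (π / 2) := ⟨hy, hyx.trans hx⟩
  have htan : tan y < tan x := tan_lt_tan_of_lt_of_lt_pi_div_two (by linarith [pi_pos]) hx hyx
  have hmaps : MapsTo (fun t => exp (t * log x + (1 - t) * log y)) (Icc 0 1) (Icc y x) :=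
    fun t ht => exp_convexComb_log_mem_Icc hy hyx.le ht
  have hcont : Continuous fun t => exp (t * log x + (1 - t) * log y) := by fun_prop
  have htan_cont : ContinuousOn tan (Icc y x) := continuousOn_tan.mono fun v hv =>
    (cos_pos_of_mem_Ioo ⟨by linarith [hv.1, pi_pos], hv.2.trans_lt hx⟩).ne'
  calc tan (logMean x y) = tan (∫ t in (0 : ℝ)..1, exp (t * log x + (1 - t) * log y)) := by
        rw [logMean_eq_integral hx'.1 hy hyx.ne']
    _ ≤ ∫ t in (0 : ℝ)..1, tan (exp (t * log x + (1 - t) * log y)) :=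
        (convexOn_tan.subset (Icc_subset_Ico hy.le hx) (convex_Icc y x)).map_intervalIntegral_le
          htan_cont isClosed_Icc hcont.continuousOn hmaps
    _ ≤ ∫ t in (0 : ℝ)..1, exp (t * log (tan x) + (1 - t) * log (tan y)) :=
        intervalIntegral.integral_mono_on zero_le_one
          ((htan_cont.comp hcont.continuousOn hmaps).intervalIntegrable_of_Icc zero_le_one)
          ((by fun_prop : Continuous _).intervalIntegrable 0 1)
          fun t ht => tan_exp_convexComb_log_le hx' hy' ht.1 ht.2
    _ = logMean (tan x) (tan y) :=
        (logMean_eq_integral (tan_pos_of_pos_of_lt_pi_div_two hx'.1 hx)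
          (tan_pos_of_pos_of_lt_pi_div_two hy hy'.2) htan.ne').symm

theorem stmt13 (x y : ℝ) (hx : x ∈ Set.Ioo (π / 4) (π / 2))
    (hy : y ∈ Set.Ioo (π / 4) (π / 2)) (hxy : x ≠ y) :
    logMean (Real.tan x) (Real.tan y) ≥ Real.tan (logMean x y) := by
  have hπ : 0 < π / 4 := by positivity
  rcases hxy.lt_or_gt with hlt | hgt
  · rw [logMean_comm (tan x), logMean_comm x]
    exact tan_logMean_le_logMean_tan (hπ.trans hx.1) hlt hy.2
  · exact tan_logMean_le_logMean_tan (hπ.trans hy.1) hgt hx.2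
end
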